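/- arXiv:1706.01889 — 3 statements merged into one kernel-verified Lean document; each statement's English description precedes it below -/
import Mathlib

section
/- For the differential operators e = (t1+t2-t3)∂1 + (t1-t2-t3)∂3, f = (t1+t2-t3)∂2 + (t2-t1-t3)∂3, h = -2t1∂1 + 2t2∂2 - 2(t1-t2)∂3 acting on polynomials in t1,t2,t3, the commutation relations [e,f]=h, [h,e]=2e, [h,f]=-2f hold, i.e. they form an sl(2) triple. -/
/-!
Each of `e`, `f`, `h` is a derivation of `ℚ[t₁, t₂, t₃]`, hence so is each commutator. A
derivation of a polynomial ring is determined by its values on the variables, so every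
relation reduces to three identities between linear polynomials.
-/

open MvPolynomial

noncomputable section

/-- `e = (t1+t2-t3)∂1 + (t1-t2-t3)∂3`. -/
def opE (P : MvPolynomial (Fin 3) ℚ) : MvPolynomial (Fin 3) ℚ :=
  (X 0 + X 1 - X 2) * pderiv 0 P + (X 0 - X 1 - X 2) * pderiv 2 P

/-- `f = (t1+t2-t3)∂2 + (t2-t1-t3)∂3`. -/
def opF (P : MvPolynomial (Fin 3) ℚ) : MvPolynomial (Fin 3) ℚ :=
  (X 0 + X 1 - X 2) * pderiv 1 P + (X 1 - X 0 - X 2) * pderiv 2 P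

/-- `h = -2t1∂1 + 2t2∂2 - 2(t1-t2)∂3`. -/
def opH (P : MvPolynomial (Fin 3) ℚ) : MvPolynomial (Fin 3) ℚ :=
  (-2) * X 0 * pderiv 0 P + 2 * X 1 * pderiv 1 P + (-2) * (X 0 - X 1) * pderiv 2 P

theorem Derivation.finset_sum_apply {R A M ι : Type*} [CommSemiring R] [CommSemiring A]
    [AddCommMonoid M] [Algebra R A] [Module A M] [Module R M] (s : Finset ι)
    (D : ι → Derivation R A M) (a : A) : (∑ i ∈ s, D i) a = ∑ i ∈ s, D i a := by
  rw [← coeFnAddMonoidHom_apply, map_sum, Finset.sum_apply]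
  rfl

theorem MvPolynomial.derivation_apply_eq_sum_pderiv {R σ : Type*} [CommSemiring R] [Fintype σ]
    (D : Derivation R (MvPolynomial σ R) (MvPolynomial σ R)) (P : MvPolynomial σ R) :
    D P = ∑ i, D (X i) * pderiv i P := by
  classical
  suffices D = ∑ i, D (X i) • pderiv i by
    conv_lhs => rw [this]
    simp [Derivation.finset_sum_apply]
  exact derivation_ext fun j => by
    simp [Derivation.finset_sum_apply, pderiv_X, Pi.single_apply]

@[simp]
theorem Derivation.map_ofNat {R A M : Type*} [CommSemiring R] [CommSemiring A] [AddCommMonoid M]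
    [Algebra R A] [Module A M] [Module R M] (D : Derivation R A M) (n : ℕ) [n.AtLeastTwo] :
    D (ofNat(n) : A) = 0 :=
  D.map_natCast n

abbrev PolyDerivation := Derivation ℚ (MvPolynomial (Fin 3) ℚ) (MvPolynomial (Fin 3) ℚ)

def derivE : PolyDerivation := mkDerivation ℚ ![X 0 + X 1 - X 2, 0, X 0 - X 1 - X 2]

def derivF : PolyDerivation := mkDerivation ℚ ![0, X 0 + X 1 - X 2, X 1 - X 0 - X 2]

def derivH : PolyDerivation := mkDerivation ℚ ![-2 * X 0, 2 * X 1, -2 * (X 0 - X 1)]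

theorem opE_eq_derivE : opE = derivE := by
  funext P
  rw [derivation_apply_eq_sum_pderiv, Fin.sum_univ_three]
  simp [opE, derivE, mkDerivation_X]

theorem opF_eq_derivF : opF = derivF := by
  funext P
  rw [derivation_apply_eq_sum_pderiv, Fin.sum_univ_three]
  simp [opF, derivF, mkDerivation_X]

theorem opH_eq_derivH : opH = derivH := by
  funext P
  rw [derivation_apply_eq_sum_pderiv, Fin.sum_univ_three]
  simp [opH, derivH, mkDerivation_X]

theorem lie_derivE_derivF : ⁅derivE, derivF⁆ = derivH :=
  derivation_ext fun j => by
    fin_cases j <;>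
      simp only [Derivation.commutator_apply, derivE, derivF, derivH, mkDerivation_X, Fin.zero_eta,
        Fin.mk_one, Fin.reduceFinMk, Matrix.cons_val, map_add, map_sub, map_zero] <;>
      ring

theorem lie_derivH_derivE : ⁅derivH, derivE⁆ = (2 : MvPolynomial (Fin 3) ℚ) • derivE :=
  derivation_ext fun j => by
    fin_cases j <;>
      simp only [Derivation.commutator_apply, Derivation.smul_apply, smul_eq_mul, derivE, derivH,
        mkDerivation_X, Fin.zero_eta, Fin.mk_one, Fin.reduceFinMk, Matrix.cons_val, map_add,
        map_sub, map_neg, map_zero, mul_zero, Derivation.leibniz, Derivation.map_ofNat] <;>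
      ring

theorem lie_derivH_derivF : ⁅derivH, derivF⁆ = (-2 : MvPolynomial (Fin 3) ℚ) • derivF :=
  derivation_ext fun j => by
    fin_cases j <;>
      simp only [Derivation.commutator_apply, Derivation.smul_apply, smul_eq_mul, derivF, derivH,
        mkDerivation_X, Fin.zero_eta, Fin.mk_one, Fin.reduceFinMk, Matrix.cons_val, map_add,
        map_sub, map_neg, map_zero, mul_zero, Derivation.leibniz, Derivation.map_ofNat] <;>
      ring

/-- The operators `e`, `f`, `h` form an `sl(2)` triple:
`[e,f] = h`, `[h,e] = 2e`, `[h,f] = -2f`. -/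
theorem stmt_2 :
    (∀ P : MvPolynomial (Fin 3) ℚ, opE (opF P) - opF (opE P) = opH P) ∧
    (∀ P : MvPolynomial (Fin 3) ℚ, opH (opE P) - opE (opH P) = 2 * opE P) ∧
    (∀ P : MvPolynomial (Fin 3) ℚ, opH (opF P) - opF (opH P) = -2 * opF P) := by
  rw [opE_eq_derivE, opF_eq_derivF, opH_eq_derivH]
  refine ⟨fun P => ?_, fun P => ?_, fun P => ?_⟩ <;> rw [← Derivation.commutator_apply]
  · rw [lie_derivE_derivF]
  · rw [lie_derivH_derivE, Derivation.smul_apply, smul_eq_mul]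
  · rw [lie_derivH_derivF, Derivation.smul_apply, smul_eq_mul]

end
end

section
/- With e, f, h the sl(2) triple e = (t1+t2-t3)∂1 + (t1-t2-t3)∂3, f = (t1+t2-t3)∂2 + (t2-t1-t3)∂3, h = -2t1∂1 + 2t2∂2 - 2(t1-t2)∂3, the quadratic Casimir operator (1/2)ef + (1/2)fe + (1/4)h^2 equals D^2 + D + (t1^2+t2^2+t3^2-2t1t2-2t2t3-2t3t1)(∂1∂2+∂2∂3+∂3∂1), where D = t1∂1 + t2∂2 + t3∂3. -/
/-!
Each of `e`, `f`, `h`, `D` is a vector field `∑ aᵢ ∂ᵢ` with linear coefficients, and a composite of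
two vector fields is `∑ⱼ a(bⱼ) ∂ⱼ + ∑ᵢⱼ aᵢ bⱼ ∂ᵢ∂ⱼ`. So, after multiplying by 4, both sides are
second-order operators without constant term and it suffices to compare coefficients: the
first-order coefficients of `2ef + 2fe + h²` are `8 tⱼ`, as are those of `4(D² + D)`, and the
second-order parts agree by a polynomial identity once `∂ᵢ∂ⱼ = ∂ⱼ∂ᵢ` is used.
-/

open MvPolynomial

noncomputable section

/-- The Euler operator `D = t1∂1 + t2∂2 + t3∂3`. -/
def opD (P : MvPolynomial (Fin 3) ℚ) : MvPolynomial (Fin 3) ℚ :=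
  X 0 * pderiv 0 P + X 1 * pderiv 1 P + X 2 * pderiv 2 P

namespace MvPolynomial

variable {σ R : Type*} [CommSemiring R]

theorem pderiv_pderiv_comm (i j : σ) (p : MvPolynomial σ R) :
    pderiv i (pderiv j p) = pderiv j (pderiv i p) := by
  classical
  induction p using MvPolynomial.induction_on with
  | C a => simp
  | add p q hp hq => simp [hp, hq]
  | mul_X p k hp =>
    simp only [pderiv_mul, map_add, pderiv_X, hp, Pi.single_apply]
    split_ifs <;> simp
    abel

theorem pderiv_ofNat (i : σ) (n : ℕ) [n.AtLeastTwo] :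
    pderiv i (ofNat(n) : MvPolynomial σ R) = 0 :=
  Derivation.map_natCast _ n

variable [Fintype σ]

def vectorField (a : σ → MvPolynomial σ R) (p : MvPolynomial σ R) : MvPolynomial σ R :=
  ∑ i, a i * pderiv i p

theorem vectorField_vectorField (a b : σ → MvPolynomial σ R) (p : MvPolynomial σ R) :
    vectorField a (vectorField b p) =
      ∑ j, vectorField a (b j) * pderiv j p + ∑ i, ∑ j, a i * b j * pderiv i (pderiv j p) := by
  simp only [vectorField, map_sum, pderiv_mul, mul_add, Finset.mul_sum, Finset.sum_mul,
    Finset.sum_add_distrib, mul_assoc]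
  rw [Finset.sum_comm (f := fun i j => a i * (pderiv i (b j) * pderiv j p))]

theorem vectorField_X_X (j : σ) : vectorField X (X j : MvPolynomial σ R) = X j := by
  classical
  simp [vectorField, pderiv_X, Pi.single_apply]

end MvPolynomial

def eField : Fin 3 → MvPolynomial (Fin 3) ℚ := ![X 0 + X 1 - X 2, 0, X 0 - X 1 - X 2]

def fField : Fin 3 → MvPolynomial (Fin 3) ℚ := ![0, X 0 + X 1 - X 2, X 1 - X 0 - X 2]

def hField : Fin 3 → MvPolynomial (Fin 3) ℚ := ![-2 * X 0, 2 * X 1, -2 * (X 0 - X 1)]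

theorem opE_eq_vectorField : opE = vectorField eField := by
  ext1 P
  simp [opE, vectorField, eField, Fin.sum_univ_three]

theorem opF_eq_vectorField : opF = vectorField fField := by
  ext1 P
  simp [opF, vectorField, fField, Fin.sum_univ_three]

theorem opH_eq_vectorField : opH = vectorField hField := by
  ext1 P
  simp [opH, vectorField, hField, Fin.sum_univ_three]

theorem opD_eq_vectorField : opD = vectorField X := by
  ext1 P
  simp [opD, vectorField, Fin.sum_univ_three]

theorem casimir_firstOrder_coeff (j : Fin 3) :
    2 * vectorField eField (fField j) + 2 * vectorField fField (eField j) +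
      vectorField hField (hField j) = 8 * X j := by
  fin_cases j <;>
    simp [vectorField, eField, fField, hField, Fin.sum_univ_three, pderiv_X, pderiv_ofNat,
      Pi.single_apply] <;>
    ring

theorem casimir_secondOrder (P : MvPolynomial (Fin 3) ℚ) :
    2 * ∑ i, ∑ j, eField i * fField j * pderiv i (pderiv j P) +
        2 * ∑ i, ∑ j, fField i * eField j * pderiv i (pderiv j P) +
        ∑ i, ∑ j, hField i * hField j * pderiv i (pderiv j P) =
      4 * ∑ i, ∑ j, X i * X j * pderiv i (pderiv j P) +
        4 * (X 0 ^ 2 + X 1 ^ 2 + X 2 ^ 2 - 2 * X 0 * X 1 - 2 * X 1 * X 2 - 2 * X 2 * X 0) *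
          (pderiv 0 (pderiv 1 P) + pderiv 1 (pderiv 2 P) + pderiv 2 (pderiv 0 P)) := by
  simp only [Fin.sum_univ_three, eField, fField, hField, Matrix.cons_val_zero,
    Matrix.cons_val_one, Matrix.cons_val_two, Matrix.head_cons, Matrix.tail_cons]
  rw [pderiv_pderiv_comm 1 0, pderiv_pderiv_comm 2 1, pderiv_pderiv_comm 0 2]
  ring

theorem casimir_mul_four (P : MvPolynomial (Fin 3) ℚ) :
    2 • opE (opF P) + 2 • opF (opE P) + opH (opH P) =
      4 • (opD (opD P) + opD P +
        (X 0 ^ 2 + X 1 ^ 2 + X 2 ^ 2 - 2 * X 0 * X 1 - 2 * X 1 * X 2 - 2 * X 2 * X 0) *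
          (pderiv 0 (pderiv 1 P) + pderiv 1 (pderiv 2 P) + pderiv 2 (pderiv 0 P))) := by
  rw [opE_eq_vectorField, opF_eq_vectorField, opH_eq_vectorField, opD_eq_vectorField]
  simp only [vectorField_vectorField, vectorField_X_X]
  linear_combination (norm := (simp only [vectorField, Fin.sum_univ_three]; ring1))
    pderiv 0 P * casimir_firstOrder_coeff 0 + pderiv 1 P * casimir_firstOrder_coeff 1 +
      pderiv 2 P * casimir_firstOrder_coeff 2 + casimir_secondOrder P

/-- The quadratic Casimir `(1/2)ef + (1/2)fe + (1/4)h²` equals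
`D² + D + (t1²+t2²+t3²-2t1t2-2t2t3-2t3t1)(∂1∂2+∂2∂3+∂3∂1)`. -/
theorem stmt_3 (P : MvPolynomial (Fin 3) ℚ) :
    (1 / 2 : ℚ) • opE (opF P) + (1 / 2 : ℚ) • opF (opE P) + (1 / 4 : ℚ) • opH (opH P)
      = opD (opD P) + opD P +
        (X 0 ^ 2 + X 1 ^ 2 + X 2 ^ 2 - 2 * X 0 * X 1 - 2 * X 1 * X 2 - 2 * X 2 * X 0) *
          (pderiv 0 (pderiv 1 P) + pderiv 1 (pderiv 2 P) + pderiv 2 (pderiv 0 P)) := by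
  have h := casimir_mul_four P
  simp only [← Nat.cast_smul_eq_nsmul ℚ, Nat.cast_ofNat] at h
  linear_combination (norm := module) (1 / 4 : ℚ) • h

end
end

section
/- For every non-negative integer k, the number of S4-invariants in the k-th symmetric power of the 6-dimensional permutation-type representation of S4 on the edges of the tetrahedron equals the coefficient of q^k in (1 - q + q^2 + q^4 + q^6 - q^7 + q^8) / ((1-q)^6 (1+q)^2 (1+q^2) (1+q+q^2)^2); in particular these numbers for k = 0,...,7 are 1, 1, 3, 6, 11, 18, 32, 48. -/
open PowerSeries

noncomputable section

/-- Edges of the tetrahedron on vertex set `Fin 4`: off-diagonal elements of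
`Sym2 (Fin 4)` (unordered pairs of distinct vertices); there are six of them. -/
abbrev Edge := {e : Sym2 (Fin 4) // ¬ e.IsDiag}

/-- The 6-dimensional permutation-type representation of `S4` on the edges of the
tetrahedron, as a permutation matrix. -/
def edgeMat (g : Equiv.Perm (Fin 4)) : Matrix Edge Edge ℚ :=
  Matrix.of fun i j => if i.1 = Sym2.map g j.1 then 1 else 0

/-- The Molien factor `1/det(1 - q·ρ(g))` as a power series in `q`. -/
def molienTerm (g : Equiv.Perm (Fin 4)) : PowerSeries ℚ :=
  (Matrix.det (1 - (PowerSeries.X : PowerSeries ℚ) • (edgeMat g).map PowerSeries.C))⁻¹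

/-- The rational function `(1 - q + q² + q⁴ + q⁶ - q⁷ + q⁸) /
((1-q)⁶ (1+q)² (1+q²) (1+q+q²)²)` as a power series. -/
def f18 : PowerSeries ℚ :=
  (1 - PowerSeries.X + PowerSeries.X ^ 2 + PowerSeries.X ^ 4 + PowerSeries.X ^ 6
      - PowerSeries.X ^ 7 + PowerSeries.X ^ 8) *
    ((1 - PowerSeries.X) ^ 6 * (1 + PowerSeries.X) ^ 2 * (1 + PowerSeries.X ^ 2) *
        (1 + PowerSeries.X + PowerSeries.X ^ 2) ^ 2)⁻¹

/-!
The Molien term of `g` only depends on the conjugacy class of `g`, since conjugating `ρ(g)` does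
not change `det (1 - q ρ(g))`. The five classes of `S₄` have sizes `1, 6, 3, 8, 6`, and on the
edges their elements act with cycle types `1⁶`, `1²2²` (transpositions and double transpositions
alike), `3²` and `2·4`, so the Molien series is
`(1/24) ((1-q)⁻⁶ + 9 (1-q)⁻²(1-q²)⁻² + 8 (1-q³)⁻² + 6 (1-q²)⁻¹(1-q⁴)⁻¹)`,
which over the common denominator is the stated fraction. For the first coefficients, the
numerator minus the truncation `1 + q + 3q² + ⋯ + 48q⁷` times the denominator is divisible by `q⁸`.
-/

open Equiv Finset Matrix

theorem Matrix.det_one_sub_smul_conj {n R : Type*} [Fintype n] [DecidableEq n] [CommRing R]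
    (t : R) (A P Q : Matrix n n R) (hPQ : P * Q = 1) :
    (1 - t • (P * A * Q)).det = (1 - t • A).det := by
  have hconj : 1 - t • (P * A * Q) = P * (1 - t • A) * Q := by
    rw [Matrix.mul_sub, Matrix.sub_mul, Matrix.mul_one, hPQ, Matrix.mul_smul, Matrix.smul_mul]
  rw [hconj, det_mul, det_mul, mul_right_comm, ← det_mul, hPQ, det_one, one_mul]

theorem Matrix.det_one_sub_smul_submatrix_equiv {m n R : Type*} [Fintype m] [DecidableEq m]
    [Fintype n] [DecidableEq n] [CommRing R] (t : R) (A : Matrix n n R) (e : m ≃ n) :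
    (1 - t • A.submatrix e e).det = (1 - t • A).det := by
  rw [← det_submatrix_equiv_self e, ← submatrix_one_equiv e]
  rfl

theorem sum_eq_sum_image_of_isConj {G M : Type*} [Group G] [Fintype G] [DecidableEq G]
    [AddCommMonoid M] {f : G → M} (hf : ∀ g h, f (h * g * h⁻¹) = f g) {r : G → G}
    (hr : ∀ g, IsConj (r g) g) :
    ∑ g, f g = ∑ c ∈ univ.image r, #{g | r g = c} • f c := by
  have hfr : ∀ g, f g = f (r g) := fun g => by
    obtain ⟨h, hh⟩ := isConj_iff.mp (hr g)
    rw [← hf (r g) h, hh]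
  rw [sum_congr rfl fun g _ => hfr g, Finset.sum_comp]

theorem PowerSeries.inv_eq_mul_inv_of_mul_eq {k : Type*} [Field k] {d e D : k⟦X⟧}
    (hD : constantCoeff D ≠ 0) (h : d * e = D) : d⁻¹ = e * D⁻¹ := by
  have hd : constantCoeff d ≠ 0 := by
    rw [← h, map_mul] at hD
    exact left_ne_zero_of_mul hD
  rw [eq_mul_inv_iff_mul_eq hD, ← h, ← mul_assoc, PowerSeries.inv_mul_cancel _ hd, one_mul]

theorem PowerSeries.coeff_eq_of_sub_mul_eq_X_pow_mul {k : Type*} [Field k] {f F D N R : k⟦X⟧}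
    {n m : ℕ} (hD : constantCoeff D ≠ 0) (hf : f * D = N) (hF : N - F * D = X ^ n * R)
    (hm : m < n) : coeff m f = coeff m F := by
  have hdiff : f - F = X ^ n * (R * D⁻¹) := by
    rw [← mul_assoc, ← hF, ← hf, ← sub_mul, mul_assoc, PowerSeries.mul_inv_cancel _ hD, mul_one]
  rw [← sub_eq_zero, ← map_sub, hdiff, coeff_X_pow_mul', if_neg (by omega)]

lemma edgeMat_one : edgeMat 1 = 1 := by decide

lemma edgeMat_mul (g h : Perm (Fin 4)) : edgeMat (g * h) = edgeMat g * edgeMat h := by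
  ext i j
  have hj : ¬ (Sym2.map h j.1).IsDiag := (Sym2.isDiag_map h.injective).not.mpr j.2
  rw [Matrix.mul_apply, Finset.sum_eq_single (⟨Sym2.map h j.1, hj⟩ : Edge)]
  · simp [edgeMat, Sym2.map_map, Function.comp]
  · intro b _ hb
    have : b.1 ≠ Sym2.map h j.1 := fun hc => hb (Subtype.ext hc)
    simp [edgeMat, this]
  · simp

lemma molienTerm_conj (g h : Perm (Fin 4)) : molienTerm (h * g * h⁻¹) = molienTerm g := by
  have hinv : (edgeMat h).map C * (edgeMat h⁻¹).map C = (1 : Matrix Edge Edge ℚ⟦X⟧) := by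
    rw [← Matrix.map_mul, ← edgeMat_mul, mul_inv_cancel, edgeMat_one,
      Matrix.map_one _ (map_zero _) (map_one _)]
  rw [molienTerm, molienTerm, edgeMat_mul, edgeMat_mul, Matrix.map_mul, Matrix.map_mul,
    det_one_sub_smul_conj _ _ _ _ hinv]

/-- An enumeration of the edges, so that determinants can be expanded along rows. -/
def edgeEquiv : Fin 6 ≃ Edge :=
  Equiv.ofBijective ![⟨s(0, 1), by decide⟩, ⟨s(0, 2), by decide⟩, ⟨s(0, 3), by decide⟩,
    ⟨s(1, 2), by decide⟩, ⟨s(1, 3), by decide⟩, ⟨s(2, 3), by decide⟩] (by decide)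

lemma molienTerm_eq_inv {g : Perm (Fin 4)} {A : Matrix (Fin 6) (Fin 6) ℚ} {p : ℚ⟦X⟧}
    (hA : (edgeMat g).submatrix edgeEquiv edgeEquiv = A)
    (hp : (1 - (X : ℚ⟦X⟧) • A.map C).det = p) : molienTerm g = p⁻¹ := by
  rw [molienTerm, ← det_one_sub_smul_submatrix_equiv _ _ edgeEquiv, ← hp, ← hA]
  rfl

lemma molienTerm_one : molienTerm 1 = ((1 - X) ^ 6 : ℚ⟦X⟧)⁻¹ := by
  have hscalar : (1 : Matrix Edge Edge ℚ⟦X⟧) - (X : ℚ⟦X⟧) • 1 = (1 - X : ℚ⟦X⟧) • 1 := by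
    rw [sub_smul, one_smul]
  rw [molienTerm, edgeMat_one, Matrix.map_one _ (map_zero _) (map_one _), hscalar, det_smul,
    det_one, mul_one]
  rfl

lemma molienTerm_swap : molienTerm (swap 0 1) = ((1 - X) ^ 2 * (1 - X ^ 2) ^ 2 : ℚ⟦X⟧)⁻¹ :=
  molienTerm_eq_inv
    (A := !![1,0,0,0,0,0; 0,0,0,1,0,0; 0,0,0,0,1,0; 0,1,0,0,0,0; 0,0,1,0,0,0; 0,0,0,0,0,1])
    (by decide) (by simp [det_succ_row_zero, Fin.sum_univ_succ, Fin.succAbove, one_apply]; ring)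

lemma molienTerm_swap_mul_swap :
    molienTerm (swap 0 1 * swap 2 3) = ((1 - X) ^ 2 * (1 - X ^ 2) ^ 2 : ℚ⟦X⟧)⁻¹ :=
  molienTerm_eq_inv
    (A := !![1,0,0,0,0,0; 0,0,0,0,1,0; 0,0,0,1,0,0; 0,0,1,0,0,0; 0,1,0,0,0,0; 0,0,0,0,0,1])
    (by decide) (by simp [det_succ_row_zero, Fin.sum_univ_succ, Fin.succAbove, one_apply]; ring)

set_option maxHeartbeats 400000 in
lemma molienTerm_threeCycle : molienTerm c[0, 1, 2] = ((1 - X ^ 3) ^ 2 : ℚ⟦X⟧)⁻¹ :=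
  molienTerm_eq_inv
    (A := !![0,1,0,0,0,0; 0,0,0,1,0,0; 0,0,0,0,0,1; 1,0,0,0,0,0; 0,0,1,0,0,0; 0,0,0,0,1,0])
    (by decide) (by simp [det_succ_row_zero, Fin.sum_univ_succ, Fin.succAbove, one_apply]; ring)

set_option maxHeartbeats 400000 in
lemma molienTerm_fourCycle : molienTerm c[0, 1, 2, 3] = ((1 - X ^ 2) * (1 - X ^ 4) : ℚ⟦X⟧)⁻¹ :=
  molienTerm_eq_inv
    (A := !![0,0,1,0,0,0; 0,0,0,0,1,0; 0,0,0,0,0,1; 1,0,0,0,0,0; 0,1,0,0,0,0; 0,0,0,1,0,0])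
    (by decide) (by simp [det_succ_row_zero, Fin.sum_univ_succ, Fin.succAbove, one_apply]; ring)

def classRep (g : Perm (Fin 4)) : Perm (Fin 4) :=
  if g.cycleType = {2} then swap 0 1
  else if g.cycleType = {2, 2} then swap 0 1 * swap 2 3
  else if g.cycleType = {3} then c[0, 1, 2]
  else if g.cycleType = {4} then c[0, 1, 2, 3]
  else 1

lemma isConj_classRep (g : Perm (Fin 4)) : IsConj (classRep g) g :=
  Perm.isConj_iff_cycleType_eq.mpr <| by revert g; decide

lemma sum_molienTerm : ∑ g, molienTerm g = molienTerm 1 + 6 • molienTerm (swap 0 1)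
    + 3 • molienTerm (swap 0 1 * swap 2 3) + 8 • molienTerm c[0, 1, 2]
    + 6 • molienTerm c[0, 1, 2, 3] := by
  rw [sum_eq_sum_image_of_isConj molienTerm_conj isConj_classRep,
    show univ.image classRep = {1, swap 0 1, swap 0 1 * swap 2 3, c[0, 1, 2], c[0, 1, 2, 3]} by
      decide,
    sum_insert (by decide), sum_insert (by decide), sum_insert (by decide), sum_insert (by decide),
    sum_singleton, show #{g | classRep g = 1} = 1 by decide,
    show #{g | classRep g = swap 0 1} = 6 by decide,
    show #{g | classRep g = swap 0 1 * swap 2 3} = 3 by decide,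
    show #{g | classRep g = c[0, 1, 2]} = 8 by decide,
    show #{g | classRep g = c[0, 1, 2, 3]} = 6 by decide, one_smul]
  abel

local notation "denom" =>
  ((1 - X) ^ 6 * (1 + X) ^ 2 * (1 + X ^ 2) * (1 + X + X ^ 2) ^ 2 : ℚ⟦X⟧)

lemma constantCoeff_denom : constantCoeff denom ≠ 0 := by simp

lemma f18_mul_denom : f18 * denom = 1 - X + X ^ 2 + X ^ 4 + X ^ 6 - X ^ 7 + X ^ 8 := by
  rw [f18, mul_assoc, PowerSeries.inv_mul_cancel _ constantCoeff_denom, mul_one]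

lemma molien_sum_eq_f18 : (24 : ℚ⟦X⟧)⁻¹ * ∑ g, molienTerm g = f18 := by
  have h24 : (24 : ℚ⟦X⟧)⁻¹ * 24 = 1 :=
    PowerSeries.inv_mul_cancel _ (by rw [map_ofNat]; norm_num)
  rw [sum_molienTerm, molienTerm_one, molienTerm_swap, molienTerm_swap_mul_swap,
    molienTerm_threeCycle, molienTerm_fourCycle, f18,
    inv_eq_mul_inv_of_mul_eq constantCoeff_denom (d := (1 - X) ^ 6)
      (e := (1 + X) ^ 2 * (1 + X ^ 2) * (1 + X + X ^ 2) ^ 2) (by ring),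
    inv_eq_mul_inv_of_mul_eq constantCoeff_denom (d := (1 - X) ^ 2 * (1 - X ^ 2) ^ 2)
      (e := (1 - X) ^ 2 * (1 + X ^ 2) * (1 + X + X ^ 2) ^ 2) (by ring),
    inv_eq_mul_inv_of_mul_eq constantCoeff_denom (d := (1 - X ^ 3) ^ 2)
      (e := (1 - X) ^ 4 * (1 + X) ^ 2 * (1 + X ^ 2)) (by ring),
    inv_eq_mul_inv_of_mul_eq constantCoeff_denom (d := (1 - X ^ 2) * (1 - X ^ 4))
      (e := (1 - X) ^ 4 * (1 + X + X ^ 2) ^ 2) (by ring)]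
  linear_combination
    (1 - X + X ^ 2 + X ^ 4 + X ^ 6 - X ^ 7 + X ^ 8) * denom⁻¹ * h24

lemma coeff_f18 {m : ℕ} (hm : m < 8) :
    coeff m f18 = coeff m (1 + X + 3 * X ^ 2 + 6 * X ^ 3 + 11 * X ^ 4 + 18 * X ^ 5 + 32 * X ^ 6
      + 48 * X ^ 7 : ℚ⟦X⟧) :=
  coeff_eq_of_sub_mul_eq_X_pow_mul constantCoeff_denom f18_mul_denom
    (R := 75 - 39 * X - 62 * X ^ 2 - 96 * X ^ 3 + 15 * X ^ 4 + 166 * X ^ 5 + 39 * X ^ 6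
      + 49 * X ^ 7 - 151 * X ^ 8 - 80 * X ^ 9 + 25 * X ^ 10 + 46 * X ^ 11 + 64 * X ^ 12
      - 48 * X ^ 13) (by ring) hm

/-- By Molien's theorem, the generating function of the numbers of `S4`-invariants
in `Sym^k` of the 6-dimensional edge representation equals `f18`; in particular its
coefficients in degrees `0,…,7` are `1, 1, 3, 6, 11, 18, 32, 48`. -/
theorem stmt_18 :
    (24 : PowerSeries ℚ)⁻¹ * (∑ g : Equiv.Perm (Fin 4), molienTerm g) = f18 ∧
    PowerSeries.coeff 0 f18 = 1 ∧ PowerSeries.coeff 1 f18 = 1 ∧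
    PowerSeries.coeff 2 f18 = 3 ∧ PowerSeries.coeff 3 f18 = 6 ∧
    PowerSeries.coeff 4 f18 = 11 ∧ PowerSeries.coeff 5 f18 = 18 ∧
    PowerSeries.coeff 6 f18 = 32 ∧ PowerSeries.coeff 7 f18 = 48 := by
  refine ⟨molien_sum_eq_f18, ?_, ?_, ?_, ?_, ?_, ?_, ?_, ?_⟩ <;> rw [coeff_f18 (by norm_num)] <;>
    simp only [map_add, coeff_X, coeff_one, coeff_mul_X_pow', ← map_ofNat C, coeff_C] <;> norm_num

end
end
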